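/- arXiv:1401.2946 — 2 statements merged into one kernel-verified Lean document; each statement's English description precedes it below -/
import Mathlib

section
/- If |f'|^q is harmonically quasi-convex on [a,b] for some fixed q ≥ 1 and H = 2ab/(a+b), then for all λ ∈ [0,1]: |(1−λ) f(H) + λ (f(a) + f(b))/2 − (ab/(b−a)) ∫_a^b f(u)/u² du| ≤ ((b−a)/(4ab)) { a² C₂(1,λ,1,a,H) (max{|f'(H)|^q, |f'(a)|^q})^{1/q} + H² C₃(1,λ,1,H,b) (max{|f'(H)|^q, |f'(b)|^q})^{1/q} }. -/
open Real MeasureTheory Set intervalIntegral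

/-- Riemann–Liouville left fractional integral `J_{u+}^α h (y)`. -/
noncomputable def RLplus (α u y : ℝ) (h : ℝ → ℝ) : ℝ :=
  (1 / Real.Gamma α) * ∫ t in u..y, (y - t) ^ (α - 1) * h t

/-- Riemann–Liouville right fractional integral `J_{v−}^α h (y)`. -/
noncomputable def RLminus (α v y : ℝ) (h : ℝ → ℝ) : ℝ :=
  (1 / Real.Gamma α) * ∫ t in y..v, (t - y) ^ (α - 1) * h t

/-- The quantity `I_{f,g}(x, λ, α, a, b)` with `g u = 1/u`. -/
noncomputable def Ifg (f : ℝ → ℝ) (x lam α a b : ℝ) : ℝ :=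
  (1 - lam) * (((x - a) / (a * x)) ^ α + ((b - x) / (b * x)) ^ α) * f x
    + lam * (((x - a) / (a * x)) ^ α * f a + ((b - x) / (b * x)) ^ α * f b)
    - Real.Gamma (α + 1) *
        (RLplus α (1 / x) (1 / a) (fun u => f (1 / u))
          + RLminus α (1 / x) (1 / b) (fun u => f (1 / u)))

/-- `C₁(α, λ) = (2αλ^{1+1/α} + 1)/(α+1) − λ`. -/
noncomputable def C1 (α lam : ℝ) : ℝ :=
  (2 * α * lam ^ (1 + 1 / α) + 1) / (α + 1) - lam

/-- `C₂(α, λ, q, a, x) = x^{2q} ∫₀¹ |t^α − λ| (t a + (1−t) x)^{−2q} dt`. -/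
noncomputable def C2 (α lam q a x : ℝ) : ℝ :=
  x ^ (2 * q) * ∫ t in (0:ℝ)..1, |t ^ α - lam| * (t * a + (1 - t) * x) ^ (-(2 * q))

/-- `C₃(α, λ, q, x, b) = b^{2q} ∫₀¹ |t^α − λ| (t b + (1−t) x)^{−2q} dt`. -/
noncomputable def C3 (α lam q x b : ℝ) : ℝ :=
  b ^ (2 * q) * ∫ t in (0:ℝ)..1, |t ^ α - lam| * (t * b + (1 - t) * x) ^ (-(2 * q))

/-- `h` is harmonically quasi-convex on `[a, b] ⊆ (0, ∞)`. -/
def HarmQuasiConvexOn (a b : ℝ) (h : ℝ → ℝ) : Prop :=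
  ∀ u ∈ Icc a b, ∀ v ∈ Icc a b, ∀ t ∈ Icc (0:ℝ) 1,
    h (u * v / (t * u + (1 - t) * v)) ≤ max (h u) (h v)

/-!
Split `∫ u in a..b` at the harmonic mean `H`. For an endpoint `x` and `y = H`, let
`γ t = x y / (t x + (1 - t) y)` be the harmonic path from `x` to `y`. Integrating
`(λ - t) f (γ t)` by parts and substituting `u = γ t` back gives
`∫₀¹ (λ - t) γ'(t) f'(γ t) dt = (λ - 1) f y - λ f x + x y / (y - x) ∫ₓʸ f(u)/u² du`.
Harmonic quasi-convexity of `|f'|^q` bounds `|f' ∘ γ|` by `max(|f' x|^q, |f' y|^q)^(1/q)`,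
and `|γ'(t)| = x y |y - x| / (t x + (1 - t) y)²` leaves exactly the integrals in `C₂` and `C₃`.
-/

noncomputable def harmonicPath (x y t : ℝ) : ℝ := x * y / (t * x + (1 - t) * y)

section HarmonicPath

variable {x y t : ℝ}

lemma combo_mem_uIcc (ht : t ∈ Icc (0 : ℝ) 1) : t * x + (1 - t) * y ∈ uIcc x y := by
  rw [← segment_eq_uIcc]
  exact ⟨t, 1 - t, ht.1, sub_nonneg.2 ht.2, by ring, by simp only [smul_eq_mul]⟩

lemma combo_pos (hx : 0 < x) (hy : 0 < y) (ht : t ∈ Icc (0 : ℝ) 1) :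
    0 < t * x + (1 - t) * y :=
  (lt_min hx hy).trans_le (combo_mem_uIcc ht).1

lemma div_mem_uIcc_of_mem_uIcc (hx : 0 < x) (hy : 0 < y) {z : ℝ} (hz : z ∈ uIcc x y) :
    x * y / z ∈ uIcc x y := by
  have hmin : 0 < min x y := lt_min hx hy
  have hz0 : 0 < z := hmin.trans_le hz.1
  have hmm : min x y * max x y = x * y := min_mul_max x y
  constructor
  · rw [le_div_iff₀ hz0, ← hmm]
    exact mul_le_mul_of_nonneg_left hz.2 hmin.le
  · rw [div_le_iff₀ hz0, ← hmm, mul_comm (min x y)]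
    exact mul_le_mul_of_nonneg_left hz.1 (hmin.trans_le min_le_max).le

lemma harmonicPath_mem_uIcc (hx : 0 < x) (hy : 0 < y) (ht : t ∈ Icc (0 : ℝ) 1) :
    harmonicPath x y t ∈ uIcc x y :=
  div_mem_uIcc_of_mem_uIcc hx hy (combo_mem_uIcc ht)

lemma harmonicPath_zero (hy : y ≠ 0) : harmonicPath x y 0 = x := by
  simp [harmonicPath, hy]

lemma harmonicPath_one (hx : x ≠ 0) : harmonicPath x y 1 = y := by
  simp [harmonicPath, hx]

lemma hasDerivAt_harmonicPath (ht : t * x + (1 - t) * y ≠ 0) :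
    HasDerivAt (harmonicPath x y) (x * y * (y - x) / (t * x + (1 - t) * y) ^ 2) t := by
  have hcombo : HasDerivAt (fun s => s * x + (1 - s) * y) (1 * x + -1 * y) t :=
    ((hasDerivAt_id' t).mul_const x).add (((hasDerivAt_id' t).const_sub 1).mul_const y)
  exact ((hasDerivAt_const t (x * y)).div hcombo ht).congr_deriv (by ring)

lemma injOn_harmonicPath (hx : 0 < x) (hy : 0 < y) (hxy : x ≠ y) :
    InjOn (harmonicPath x y) (Icc 0 1) := by
  intro t₁ ht₁ t₂ ht₂ h
  rw [harmonicPath, harmonicPath,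
    div_eq_div_iff (combo_pos hx hy ht₁).ne' (combo_pos hx hy ht₂).ne'] at h
  have h' : (x - y) * t₁ = (x - y) * t₂ := by
    linear_combination (mul_left_cancel₀ (mul_pos hx hy).ne' h).symm
  exact mul_left_cancel₀ (sub_ne_zero.2 hxy) h'

end HarmonicPath

section SideEstimate

variable {f f' : ℝ → ℝ} {x y : ℝ}

lemma continuousOn_deriv_harmonicPath (hx : 0 < x) (hy : 0 < y) :
    ContinuousOn (fun t => x * y * (y - x) / (t * x + (1 - t) * y) ^ 2) (uIcc 0 1) := by
  rw [uIcc_of_le zero_le_one]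
  exact continuousOn_const.div (by fun_prop) fun t ht => pow_ne_zero 2 (combo_pos hx hy ht).ne'

/-- `f'` is merely integrable, so this rests on the change of variables for integrability along
the injective path rather than on the substitution rule for continuous integrands. -/
lemma intervalIntegrable_deriv_harmonicPath_mul (hx : 0 < x) (hy : 0 < y) (hxy : x ≠ y)
    (hf' : IntervalIntegrable f' volume x y) :
    IntervalIntegrable (fun t => x * y * (y - x) / (t * x + (1 - t) * y) ^ 2 *
      f' (harmonicPath x y t)) volume 0 1 := by
  have himg : harmonicPath x y '' Icc 0 1 ⊆ uIcc x y := by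
    rintro _ ⟨t, ht, rfl⟩
    exact harmonicPath_mem_uIcc hx hy ht
  have habs := (integrableOn_image_iff_integrableOn_abs_deriv_smul measurableSet_Icc
    (fun t ht => (hasDerivAt_harmonicPath (combo_pos hx hy ht).ne').hasDerivWithinAt)
    (injOn_harmonicPath hx hy hxy) f').1
    (((intervalIntegrable_iff' (by finiteness)).1 hf').mono_set himg)
  have hsign : IntervalIntegrable (fun t => (y - x) / |y - x| *
      (|x * y * (y - x) / (t * x + (1 - t) * y) ^ 2| • f' (harmonicPath x y t))) volume 0 1 :=
    ((intervalIntegrable_iff_integrableOn_Icc_of_le zero_le_one).2 habs).const_mul _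
  refine hsign.congr fun t _ => ?_
  have hxy' : |y - x| ≠ 0 := abs_ne_zero.2 (sub_ne_zero.2 hxy.symm)
  simp only [smul_eq_mul, abs_div, abs_mul, abs_of_pos hx, abs_of_pos hy, abs_sq]
  field_simp

lemma integral_div_sq_eq_integral_comp_harmonicPath (hx : 0 < x) (hy : 0 < y)
    (hf : ContinuousOn f (uIcc x y)) :
    ∫ u in x..y, f u / u ^ 2 = (y - x) / (x * y) * ∫ t in (0 : ℝ)..1, f (harmonicPath x y t) := by
  have himg : harmonicPath x y '' uIcc 0 1 ⊆ uIcc x y := by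
    rintro _ ⟨t, ht, rfl⟩
    exact harmonicPath_mem_uIcc hx hy (by rwa [uIcc_of_le zero_le_one] at ht)
  have hpos : ∀ u ∈ uIcc x y, u ^ 2 ≠ 0 := fun u hu =>
    pow_ne_zero 2 ((lt_min hx hy).trans_le hu.1).ne'
  have hsubst := integral_comp_mul_deriv' (a := 0) (b := 1) (g := fun u => f u / u ^ 2)
    (fun t ht => hasDerivAt_harmonicPath
      (combo_pos hx hy (by rwa [uIcc_of_le zero_le_one] at ht)).ne')
    (continuousOn_deriv_harmonicPath hx hy)
    ((hf.div (by fun_prop) hpos).mono himg)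
  rw [harmonicPath_zero hy.ne', harmonicPath_one hx.ne'] at hsubst
  rw [← hsubst, ← intervalIntegral.integral_const_mul]
  refine integral_congr fun t ht => ?_
  have hD := (combo_pos hx hy (by rwa [uIcc_of_le zero_le_one] at ht : t ∈ Icc (0 : ℝ) 1)).ne'
  simp only [Function.comp, harmonicPath]
  generalize t * x + (1 - t) * y = D at hD ⊢
  field_simp

theorem integral_mul_deriv_harmonicPath (hx : 0 < x) (hy : 0 < y) (hxy : x ≠ y)
    (hf : ∀ u ∈ uIcc x y, HasDerivAt f (f' u) u) (hf' : IntervalIntegrable f' volume x y)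
    (lam : ℝ) :
    ∫ t in (0 : ℝ)..1, (lam - t) * (x * y * (y - x) / (t * x + (1 - t) * y) ^ 2 *
        f' (harmonicPath x y t)) =
      (lam - 1) * f y - lam * f x + x * y / (y - x) * ∫ u in x..y, f u / u ^ 2 := by
  have hfc : ContinuousOn f (uIcc x y) := fun u hu => (hf u hu).continuousAt.continuousWithinAt
  have hfγ : ContinuousOn (fun t => f (harmonicPath x y t)) (uIcc 0 1) := by
    refine hfc.comp (fun t ht => ?_) fun t ht => ?_
    · exact (hasDerivAt_harmonicPath (combo_pos hx hy
        (by rwa [uIcc_of_le zero_le_one] at ht)).ne').continuousAt.continuousWithinAt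
    · exact harmonicPath_mem_uIcc hx hy (by rwa [uIcc_of_le zero_le_one] at ht)
  have hW := (intervalIntegrable_deriv_harmonicPath_mul hx hy hxy hf').continuousOn_mul
    (g := fun t => lam - t) (by fun_prop)
  have hderiv : ∀ t ∈ uIcc (0 : ℝ) 1, HasDerivAt (fun t => (lam - t) * f (harmonicPath x y t))
      ((lam - t) * (x * y * (y - x) / (t * x + (1 - t) * y) ^ 2 * f' (harmonicPath x y t))
        - f (harmonicPath x y t)) t := by
    intro t ht
    rw [uIcc_of_le zero_le_one] at ht
    have hγ := (hf _ (harmonicPath_mem_uIcc hx hy ht)).comp t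
      (hasDerivAt_harmonicPath (combo_pos hx hy ht).ne')
    exact (((hasDerivAt_id' t).const_sub lam).mul hγ).congr_deriv
      (by simp only [Function.comp_apply]; ring)
  have hFTC := integral_eq_sub_of_hasDerivAt hderiv (hW.sub hfγ.intervalIntegrable)
  rw [integral_sub hW hfγ.intervalIntegrable, harmonicPath_zero hy.ne',
    harmonicPath_one hx.ne'] at hFTC
  rw [integral_div_sq_eq_integral_comp_harmonicPath hx hy hfc]
  have hcancel : x * y / (y - x) * ((y - x) / (x * y)) = 1 := by
    have : y - x ≠ 0 := sub_ne_zero.2 hxy.symm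
    field_simp
  rw [← mul_assoc, hcancel, one_mul]
  linear_combination hFTC

theorem abs_sub_integral_le (hx : 0 < x) (hy : 0 < y) (hxy : x ≠ y)
    (hf : ∀ u ∈ uIcc x y, HasDerivAt f (f' u) u) (hf' : IntervalIntegrable f' volume x y)
    (lam M : ℝ) (hM : ∀ t ∈ Icc (0 : ℝ) 1, |f' (harmonicPath x y t)| ≤ M) :
    |(lam - 1) * f y - lam * f x + x * y / (y - x) * ∫ u in x..y, f u / u ^ 2| ≤
      M * (x * y * |y - x|) * ∫ t in (0 : ℝ)..1, |t - lam| / (t * x + (1 - t) * y) ^ 2 := by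
  rw [← integral_mul_deriv_harmonicPath hx hy hxy hf hf' lam, ← intervalIntegral.integral_const_mul]
  have hW := (intervalIntegrable_deriv_harmonicPath_mul hx hy hxy hf').continuousOn_mul
    (g := fun t => lam - t) (by fun_prop)
  refine (abs_integral_le_integral_abs zero_le_one).trans
    (integral_mono_on zero_le_one hW.abs ?_ fun t ht => ?_)
  · refine ContinuousOn.intervalIntegrable ?_
    rw [uIcc_of_le zero_le_one]
    exact continuousOn_const.mul (ContinuousOn.div (by fun_prop) (by fun_prop)
      fun t ht => pow_ne_zero 2 (combo_pos hx hy ht).ne')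
  · have hD := combo_pos hx hy ht
    rw [abs_mul, abs_mul, abs_div, abs_mul, abs_of_pos (mul_pos hx hy), abs_sq, abs_sub_comm lam]
    calc |t - lam| * (x * y * |y - x| / (t * x + (1 - t) * y) ^ 2 * |f' (harmonicPath x y t)|)
        ≤ |t - lam| * (x * y * |y - x| / (t * x + (1 - t) * y) ^ 2 * M) := by
          gcongr
          exact hM t ht
      _ = M * (x * y * |y - x|) * (|t - lam| / (t * x + (1 - t) * y) ^ 2) := by ring

end SideEstimate

lemma integral_abs_sub_mul_rpow_neg_two {x y : ℝ} (hx : 0 < x) (hy : 0 < y) (lam : ℝ) :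
    ∫ t in (0 : ℝ)..1, |t ^ (1 : ℝ) - lam| * (t * x + (1 - t) * y) ^ (-(2 * (1 : ℝ))) =
      ∫ t in (0 : ℝ)..1, |t - lam| / (t * x + (1 - t) * y) ^ 2 := by
  refine integral_congr fun t ht => ?_
  have hD := combo_pos hx hy (by rwa [uIcc_of_le zero_le_one] at ht : t ∈ Icc (0 : ℝ) 1)
  rw [rpow_one, show -(2 * (1 : ℝ)) = -((2 : ℕ) : ℝ) by norm_num, rpow_neg hD.le, rpow_natCast,
    div_eq_mul_inv]

lemma C2_one_one {x y : ℝ} (hx : 0 < x) (hy : 0 < y) (lam : ℝ) :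
    C2 1 lam 1 x y = y ^ 2 * ∫ t in (0 : ℝ)..1, |t - lam| / (t * x + (1 - t) * y) ^ 2 := by
  rw [C2, integral_abs_sub_mul_rpow_neg_two hx hy, show 2 * (1 : ℝ) = ((2 : ℕ) : ℝ) by norm_num,
    rpow_natCast]

lemma C3_one_one {x y : ℝ} (hx : 0 < x) (hy : 0 < y) (lam : ℝ) :
    C3 1 lam 1 y x = x ^ 2 * ∫ t in (0 : ℝ)..1, |t - lam| / (t * x + (1 - t) * y) ^ 2 := by
  rw [C3, integral_abs_sub_mul_rpow_neg_two hx hy, show 2 * (1 : ℝ) = ((2 : ℕ) : ℝ) by norm_num,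
    rpow_natCast]

lemma HarmQuasiConvexOn.abs_le_max {a b q : ℝ} {g : ℝ → ℝ}
    (h : HarmQuasiConvexOn a b (fun u => |g u| ^ q)) (hq : 0 < q) {u v t : ℝ}
    (hu : u ∈ Icc a b) (hv : v ∈ Icc a b) (ht : t ∈ Icc (0 : ℝ) 1) :
    |g (harmonicPath u v t)| ≤ max (|g u| ^ q) (|g v| ^ q) ^ (1 / q) :=
  calc |g (harmonicPath u v t)| = (|g (harmonicPath u v t)| ^ q) ^ (1 / q) := by
        rw [one_div, rpow_rpow_inv (abs_nonneg _) hq.ne']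
    _ ≤ max (|g u| ^ q) (|g v| ^ q) ^ (1 / q) :=
        rpow_le_rpow (by positivity) (h u hu v hv t ht) (by positivity)

theorem abs_sub_integral_le_of_harmQuasiConvexOn {f f' : ℝ → ℝ} {a b q x y : ℝ} (ha : 0 < a)
    (hq : 0 < q) (hf : ∀ u ∈ Icc a b, HasDerivAt f (f' u) u)
    (hf' : IntervalIntegrable f' volume a b) (hqc : HarmQuasiConvexOn a b (fun u => |f' u| ^ q))
    (hx : x ∈ Icc a b) (hy : y ∈ Icc a b) (hxy : x ≠ y) (lam : ℝ) :
    |(lam - 1) * f y - lam * f x + x * y / (y - x) * ∫ u in x..y, f u / u ^ 2| ≤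
      max (|f' x| ^ q) (|f' y| ^ q) ^ (1 / q) * (x * y * |y - x|) *
        ∫ t in (0 : ℝ)..1, |t - lam| / (t * x + (1 - t) * y) ^ 2 :=
  abs_sub_integral_le (ha.trans_le hx.1) (ha.trans_le hy.1) hxy
    (fun u hu => hf u (uIcc_subset_Icc hx hy hu))
    (hf'.mono_set (by rw [uIcc_of_le (hx.1.trans hx.2)]; exact uIcc_subset_Icc hx hy)) lam _
    fun t ht => hqc.abs_le_max hq hx hy ht

lemma harmonicMean_mem_Ioo {a b : ℝ} (ha : 0 < a) (hab : a < b) :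
    2 * a * b / (a + b) ∈ Ioo a b := by
  have hab' : 0 < a + b := by linarith
  constructor
  · rw [lt_div_iff₀ hab']; nlinarith
  · rw [div_lt_iff₀ hab']; nlinarith

lemma hermiteHadamard_split_eq {a b H : ℝ} (ha : 0 < a) (hab : a < b)
    (hH : H = 2 * a * b / (a + b)) (lam fa fb fH Ia Ib : ℝ) :
    (1 - lam) * fH + lam * ((fa + fb) / 2) - a * b / (b - a) * (Ia + Ib) =
      -(1 / 2) * (((lam - 1) * fH - lam * fa + a * H / (H - a) * Ia) +
        ((lam - 1) * fH - lam * fb + b * H / (H - b) * -Ib)) := by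
  obtain ⟨haH, hHb⟩ := hH ▸ harmonicMean_mem_Ioo ha hab
  have hab' : a + b ≠ 0 := by linarith
  have hcoef_a : a * H / (H - a) = 2 * a * b / (b - a) := by
    rw [div_eq_div_iff (sub_pos.2 haH).ne' (sub_pos.2 hab).ne', hH]
    field_simp
    ring
  have hcoef_b : b * H / (H - b) = -(2 * a * b) / (b - a) := by
    rw [div_eq_div_iff (sub_neg.2 hHb).ne (sub_pos.2 hab).ne', hH]
    field_simp
    ring
  rw [hcoef_a, hcoef_b]
  ring

lemma hermiteHadamard_bound_eq {a b H : ℝ} (ha : 0 < a) (hab : a < b)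
    (hH : H = 2 * a * b / (a + b)) (Ma Ja Mb Jb : ℝ) :
    1 / 2 * (Ma * (a * H * (H - a)) * Ja + Mb * (b * H * -(H - b)) * Jb) =
      (b - a) / (4 * a * b) * (a ^ 2 * (H ^ 2 * Ja) * Ma + H ^ 2 * (b ^ 2 * Jb) * Mb) := by
  have hab' : a + b ≠ 0 := by linarith
  subst hH
  field_simp
  ring

theorem stmt_10_general (f f' : ℝ → ℝ) (a b : ℝ) (ha : 0 < a) (hab : a < b)
    (hf : ∀ u ∈ Icc a b, HasDerivAt f (f' u) u)
    (hint : IntervalIntegrable f' volume a b)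
    (q : ℝ) (hq : 1 ≤ q)
    (hqc : HarmQuasiConvexOn a b (fun u => |f' u| ^ q))
    (H : ℝ) (hH : H = 2 * a * b / (a + b)) (lam : ℝ) :
    |(1 - lam) * f H + lam * ((f a + f b) / 2) - (a * b / (b - a)) * ∫ u in a..b, f u / u ^ 2| ≤
      (b - a) / (4 * a * b) *
        (a ^ 2 * C2 1 lam 1 a H * max (|f' H| ^ q) (|f' a| ^ q) ^ (1 / q)
          + H ^ 2 * C3 1 lam 1 H b * max (|f' H| ^ q) (|f' b| ^ q) ^ (1 / q)) := by
  obtain ⟨haH, hHb⟩ := hH ▸ harmonicMean_mem_Ioo ha hab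
  have hHmem : H ∈ Icc a b := ⟨haH.le, hHb.le⟩
  have hleft := abs_sub_integral_le_of_harmQuasiConvexOn ha (by linarith) hf hint hqc
    (left_mem_Icc.2 hab.le) hHmem haH.ne lam
  have hright := abs_sub_integral_le_of_harmQuasiConvexOn ha (by linarith) hf hint hqc
    (right_mem_Icc.2 hab.le) hHmem hHb.ne' lam
  have hg : ContinuousOn (fun u => f u / u ^ 2) (Icc a b) :=
    ContinuousOn.div (fun u hu => (hf u hu).continuousAt.continuousWithinAt) (by fun_prop)
      fun u hu => pow_ne_zero 2 (ha.trans_le hu.1).ne'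
  rw [← integral_add_adjacent_intervals
      ((hg.mono (uIcc_subset_Icc (left_mem_Icc.2 hab.le) hHmem)).intervalIntegrable)
      ((hg.mono (uIcc_subset_Icc hHmem (right_mem_Icc.2 hab.le))).intervalIntegrable),
    hermiteHadamard_split_eq ha hab hH, ← integral_symm, abs_mul, abs_neg,
    abs_of_pos one_half_pos]
  refine (mul_le_mul_of_nonneg_left ((abs_add_le _ _).trans (add_le_add hleft hright))
    one_half_pos.le).trans_eq ?_
  rw [C2_one_one ha (ha.trans haH), C3_one_one (ha.trans hab) (ha.trans haH),
    abs_of_pos (sub_pos.2 haH), abs_of_neg (sub_neg.2 hHb), max_comm (|f' H| ^ q),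
    max_comm (|f' H| ^ q)]
  exact hermiteHadamard_bound_eq ha hab hH _ _ _ _

theorem stmt_10 (f f' : ℝ → ℝ) (a b : ℝ) (ha : 0 < a) (hab : a < b)
    (hf : ∀ u ∈ Icc a b, HasDerivAt f (f' u) u)
    (hint : IntervalIntegrable f' volume a b)
    (q : ℝ) (hq : 1 ≤ q)
    (hqc : HarmQuasiConvexOn a b (fun u => |f' u| ^ q))
    (H : ℝ) (hH : H = 2 * a * b / (a + b)) (lam : ℝ) (hlam : lam ∈ Icc (0:ℝ) 1) :
    |(1 - lam) * f H + lam * ((f a + f b) / 2) - (a * b / (b - a)) * ∫ u in a..b, f u / u ^ 2| ≤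
      (b - a) / (4 * a * b) *
        (a ^ 2 * C2 1 lam 1 a H * max (|f' H| ^ q) (|f' a| ^ q) ^ (1 / q)
          + H ^ 2 * C3 1 lam 1 H b * max (|f' H| ^ q) (|f' b| ^ q) ^ (1 / q)) :=
  stmt_10_general f f' a b ha hab hf hint q hq hqc H hH lam
end

section
/- If |f'|^q is harmonically quasi-convex on [a,b] for some fixed q ≥ 1, α > 0, and |f'(u)| ≤ M for all u ∈ [a,b], then for all x ∈ [a,b] the following Ostrowski-type inequality holds: |[((x−a)/(ax))^α + ((b−x)/(bx))^α] f(x) − Γ(α+1) [J_{(1/x)+}^α (f∘g)(1/a) + J_{(1/x)−}^α (f∘g)(1/b)]| ≤ M [ ((x−a)^{α+1}/((ax)^{α−1} x²)) C₂(α,0,1,a,x) + ((b−x)^{α+1}/((bx)^{α−1} b²)) C₃(α,0,1,x,b) ]. -/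
/-!
Substituting `1 / s = u x / (t u + (1 - t) x)`, with `u = a` resp. `u = b`, turns each
Riemann–Liouville integral into
`(|x - u| / (u x))^α · α ∫₀¹ t^(α-1) f(u x / (t u + (1 - t) x)) dt`.
Integration by parts against `t^α` rewrites `f x - α ∫₀¹ …` as `∫₀¹ t^α φ'(t) dt`, where
`φ t = f(u x / (t u + (1 - t) x))` runs along the harmonic segment from `x` to `u` in `[a, b]`.
By the chain rule `|φ'(t)| ≤ M u x |x - u| / (t u + (1 - t) x)²`, and integrating this bound
against `t^α` produces exactly the constants `C₂` and `C₃`.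
-/

open Real MeasureTheory Set intervalIntegral

lemma rpow_eq_mul_rpow_sub_one {x α : ℝ} (hx : 0 ≤ x) (hα : α ≠ 0) :
    x ^ α = x * x ^ (α - 1) := by
  rw [mul_comm, ← rpow_add_one' hx (by simpa using hα), sub_add_cancel]

lemma integral_sub_rpow_mul_eq {α c d : ℝ} (hα : α ≠ 0) (hcd : c ≤ d) (h : ℝ → ℝ) :
    ∫ s in c..d, (d - s) ^ (α - 1) * h s
      = (d - c) ^ α * ∫ t in (0:ℝ)..1, t ^ (α - 1) * h (d + (c - d) * t) := by
  have hsub := smul_integral_comp_add_mul (E := ℝ) (a := 0) (b := 1)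
    (fun s => (d - s) ^ (α - 1) * h s) (c - d) d
  simp only [mul_zero, add_zero, mul_one, add_sub_cancel, smul_eq_mul] at hsub
  rw [integral_symm, ← hsub, ← neg_mul, neg_sub,
    rpow_eq_mul_rpow_sub_one (sub_nonneg.2 hcd) hα, mul_assoc]
  congr 1
  rw [← intervalIntegral.integral_const_mul]
  refine intervalIntegral.integral_congr fun t ht => ?_
  rw [uIcc_of_le zero_le_one] at ht
  rw [show d - (d + (c - d) * t) = (d - c) * t by ring, mul_rpow (sub_nonneg.2 hcd) ht.1]
  ring

lemma integral_rpow_sub_mul_eq {α e c : ℝ} (hα : α ≠ 0) (hec : e ≤ c) (h : ℝ → ℝ) :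
    ∫ s in e..c, (s - e) ^ (α - 1) * h s
      = (c - e) ^ α * ∫ t in (0:ℝ)..1, t ^ (α - 1) * h (e + (c - e) * t) := by
  have hsub := smul_integral_comp_add_mul (E := ℝ) (a := 0) (b := 1)
    (fun s => (s - e) ^ (α - 1) * h s) (c - e) e
  simp only [mul_zero, add_zero, mul_one, add_sub_cancel, smul_eq_mul] at hsub
  rw [← hsub, rpow_eq_mul_rpow_sub_one (sub_nonneg.2 hec) hα, mul_assoc]
  congr 1
  rw [← intervalIntegral.integral_const_mul]
  refine intervalIntegral.integral_congr fun t ht => ?_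
  rw [uIcc_of_le zero_le_one] at ht
  rw [show e + (c - e) * t - e = (c - e) * t by ring, mul_rpow (sub_nonneg.2 hec) ht.1]
  ring

lemma one_div_add_mul_sub_one_div {u x : ℝ} (hu : u ≠ 0) (hx : x ≠ 0) (t : ℝ) :
    1 / (1 / u + (1 / x - 1 / u) * t) = u * x / (t * u + (1 - t) * x) := by
  rw [show 1 / u + (1 / x - 1 / u) * t = (t * u + (1 - t) * x) / (u * x) by field_simp; ring,
    one_div_div]

lemma Gamma_add_one_mul_RLplus {α a x : ℝ} (hα : 0 < α) (ha : 0 < a) (hax : a ≤ x)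
    (h : ℝ → ℝ) :
    Gamma (α + 1) * RLplus α (1 / x) (1 / a) (fun s => h (1 / s))
      = ((x - a) / (a * x)) ^ α *
          (α * ∫ t in (0:ℝ)..1, t ^ (α - 1) * h (a * x / (t * a + (1 - t) * x))) := by
  have hx : 0 < x := ha.trans_le hax
  rw [RLplus, integral_sub_rpow_mul_eq hα.ne' (one_div_le_one_div_of_le ha hax),
    Gamma_add_one hα.ne',
    show 1 / a - 1 / x = (x - a) / (a * x) by field_simp]
  simp only [one_div_add_mul_sub_one_div ha.ne' hx.ne']
  field_simp [(Gamma_pos_of_pos hα).ne']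

lemma Gamma_add_one_mul_RLminus {α x b : ℝ} (hα : 0 < α) (hx : 0 < x) (hxb : x ≤ b)
    (h : ℝ → ℝ) :
    Gamma (α + 1) * RLminus α (1 / x) (1 / b) (fun s => h (1 / s))
      = ((b - x) / (b * x)) ^ α *
          (α * ∫ t in (0:ℝ)..1, t ^ (α - 1) * h (b * x / (t * b + (1 - t) * x))) := by
  have hb : 0 < b := hx.trans_le hxb
  rw [RLminus, integral_rpow_sub_mul_eq hα.ne' (one_div_le_one_div_of_le hx hxb),
    Gamma_add_one hα.ne']
  simp only [one_div_add_mul_sub_one_div hb.ne' hx.ne']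
  rw [show 1 / x - 1 / b = (b - x) / (b * x) by field_simp]
  field_simp [(Gamma_pos_of_pos hα).ne']

lemma sub_mul_integral_rpow_sub_one_mul_eq {α : ℝ} (hα : 0 < α) {Φ Φ' : ℝ → ℝ}
    (hΦ : ∀ t ∈ Icc (0:ℝ) 1, HasDerivAt Φ (Φ' t) t)
    (hΦ' : IntervalIntegrable Φ' volume 0 1) :
    Φ 1 - α * ∫ t in (0:ℝ)..1, t ^ (α - 1) * Φ t = ∫ t in (0:ℝ)..1, t ^ α * Φ' t := by
  have hIcc : uIcc (0:ℝ) 1 = Icc 0 1 := uIcc_of_le zero_le_one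
  have hIoo : Ioo (min (0:ℝ) 1) (max 0 1) = Ioo 0 1 := by simp
  have ibp := integral_mul_deriv_eq_deriv_mul_of_hasDeriv_right
    (u := fun t => t ^ α) (u' := fun t => α * t ^ (α - 1)) (v := Φ) (v' := Φ')
    (continuous_id.rpow_const fun _ => Or.inr hα.le).continuousOn
    (fun t ht => (hΦ t (hIcc ▸ ht)).continuousAt.continuousWithinAt)
    (fun t ht => (hasDerivAt_rpow_const (Or.inl (hIoo ▸ ht).1.ne')).hasDerivWithinAt)
    (fun t ht => (hΦ t (Ioo_subset_Icc_self (hIoo ▸ ht))).hasDerivWithinAt)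
    ((intervalIntegral.intervalIntegrable_rpow' (by linarith)).const_mul α) hΦ'
  simp only [one_rpow, zero_rpow hα.ne', one_mul, zero_mul, sub_zero, mul_assoc,
    intervalIntegral.integral_const_mul] at ibp
  rw [ibp]

lemma intervalIntegrable_of_hasDerivAt_of_abs_le {F F' g : ℝ → ℝ} {c d : ℝ} (hcd : c ≤ d)
    (hF : ∀ t ∈ Icc c d, HasDerivAt F (F' t) t) (hg : IntervalIntegrable g volume c d)
    (hle : ∀ t ∈ Icc c d, |F' t| ≤ g t) : IntervalIntegrable F' volume c d := by
  rw [intervalIntegrable_iff_integrableOn_Ioc_of_le hcd]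
  have hderiv : EqOn (deriv F) F' (Ioc c d) := fun t ht => (hF t (Ioc_subset_Icc_self ht)).deriv
  refine IntegrableOn.congr_fun ?_ hderiv measurableSet_Ioc
  refine Integrable.mono' hg.1 (measurable_deriv F).aestronglyMeasurable.restrict ?_
  refine (ae_restrict_iff' measurableSet_Ioc).2 (Filter.Eventually.of_forall fun t ht => ?_)
  rw [Real.norm_eq_abs, hderiv ht]
  exact hle t (Ioc_subset_Icc_self ht)

lemma le_add_mul_one_sub {a u x t : ℝ} (hau : a ≤ u) (hax : a ≤ x)
    (ht : t ∈ Icc (0:ℝ) 1) : a ≤ t * u + (1 - t) * x := by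
  nlinarith [ht.1, ht.2]

lemma mul_div_add_mul_one_sub_mem_Icc {a b u x t : ℝ} (ha : 0 < a) (hu : u ∈ Icc a b)
    (hx : x ∈ Icc a b) (ht : t ∈ Icc (0:ℝ) 1) :
    u * x / (t * u + (1 - t) * x) ∈ Icc a b := by
  have hD := le_add_mul_one_sub hu.1 hx.1 ht
  rw [mem_Icc, le_div_iff₀ (ha.trans_le hD), div_le_iff₀ (ha.trans_le hD)]
  have hu0 : 0 ≤ u := ha.le.trans hu.1
  have hx0 : 0 ≤ x := ha.le.trans hx.1
  have ht' : 0 ≤ 1 - t := sub_nonneg.2 ht.2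
  constructor
  · nlinarith [mul_nonneg (mul_nonneg ht.1 hu0) (sub_nonneg.2 hx.1),
      mul_nonneg (mul_nonneg ht' hx0) (sub_nonneg.2 hu.1)]
  · nlinarith [mul_nonneg (mul_nonneg ht.1 hu0) (sub_nonneg.2 hx.2),
      mul_nonneg (mul_nonneg ht' hx0) (sub_nonneg.2 hu.2)]

lemma hasDerivAt_comp_mul_div_add_mul_one_sub {f f' : ℝ → ℝ} {u x t : ℝ}
    (hD : t * u + (1 - t) * x ≠ 0)
    (hf : HasDerivAt f (f' (u * x / (t * u + (1 - t) * x))) (u * x / (t * u + (1 - t) * x))) :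
    HasDerivAt (fun t => f (u * x / (t * u + (1 - t) * x)))
      (f' (u * x / (t * u + (1 - t) * x)) * (u * x * (x - u) / (t * u + (1 - t) * x) ^ 2)) t := by
  have hden : HasDerivAt (fun t => t * u + (1 - t) * x) (u - x) t :=
    (((hasDerivAt_id' t).mul_const u).add
      (((hasDerivAt_id' t).const_sub 1).mul_const x)).congr_deriv (by ring)
  exact (hf.comp t ((hasDerivAt_const t (u * x)).div hden hD)).congr_deriv (by ring)

lemma abs_rpow_mul_sub_integral_le {f f' : ℝ → ℝ} {a b u x α M : ℝ} (ha : 0 < a)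
    (hα : 0 < α) (hu : u ∈ Icc a b) (hx : x ∈ Icc a b)
    (hf : ∀ y ∈ Icc a b, HasDerivAt f (f' y) y) (hM : ∀ y ∈ Icc a b, |f' y| ≤ M) :
    |(|x - u| / (u * x)) ^ α *
        (f x - α * ∫ t in (0:ℝ)..1, t ^ (α - 1) * f (u * x / (t * u + (1 - t) * x)))|
      ≤ M * ((|x - u| / (u * x)) ^ α * (u * x * |x - u|) *
          ∫ t in (0:ℝ)..1, t ^ α / (t * u + (1 - t) * x) ^ 2) := by
  have hu0 : 0 < u := ha.trans_le hu.1
  have hux : 0 < u * x := mul_pos hu0 (ha.trans_le hx.1)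
  set D : ℝ → ℝ := fun t => t * u + (1 - t) * x with hD_def
  have hD : ∀ t ∈ Icc (0:ℝ) 1, 0 < D t := fun t ht =>
    ha.trans_le (le_add_mul_one_sub hu.1 hx.1 ht)
  set Φ' : ℝ → ℝ := fun t => f' (u * x / D t) * (u * x * (x - u) / D t ^ 2) with hΦ'_def
  set B : ℝ → ℝ := fun t => M * (u * x * |x - u|) / D t ^ 2 with hB_def
  have hΦ : ∀ t ∈ Icc (0:ℝ) 1, HasDerivAt (fun t => f (u * x / D t)) (Φ' t) t := fun t ht =>
    hasDerivAt_comp_mul_div_add_mul_one_sub (hD t ht).ne'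
      (hf _ (mul_div_add_mul_one_sub_mem_Icc ha hu hx ht))
  have hB : ContinuousOn B (Icc 0 1) :=
    continuousOn_const.div (by fun_prop) fun t ht => (pow_pos (hD t ht) 2).ne'
  have hΦ'B : ∀ t ∈ Icc (0:ℝ) 1, |Φ' t| ≤ B t := by
    intro t ht
    simp only [hΦ'_def, hB_def]
    rw [abs_mul, abs_div, abs_mul, abs_of_pos hux, abs_of_pos (pow_pos (hD t ht) 2),
      ← mul_div_assoc]
    gcongr
    exact hM _ (mul_div_add_mul_one_sub_mem_Icc ha hu hx ht)
  have hIBP := sub_mul_integral_rpow_sub_one_mul_eq hα hΦ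
    (intervalIntegrable_of_hasDerivAt_of_abs_le zero_le_one hΦ
      (hB.intervalIntegrable_of_Icc zero_le_one) hΦ'B)
  rw [show u * x / D 1 = x by simp [hD_def, hu0.ne']] at hIBP
  have hbound : |∫ t in (0:ℝ)..1, t ^ α * Φ' t| ≤ ∫ t in (0:ℝ)..1, t ^ α * B t := by
    have hcont : ContinuousOn (fun t => t ^ α * B t) (Icc 0 1) :=
      (continuousOn_id.rpow_const fun _ _ => Or.inr hα.le).mul hB
    rw [← Real.norm_eq_abs]
    refine norm_integral_le_of_norm_le zero_le_one (ae_of_all _ fun t ht => ?_)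
      (hcont.intervalIntegrable_of_Icc zero_le_one)
    rw [norm_mul, Real.norm_eq_abs, Real.norm_eq_abs, abs_of_nonneg (rpow_nonneg ht.1.le _)]
    exact mul_le_mul_of_nonneg_left (hΦ'B t (Ioc_subset_Icc_self ht)) (rpow_nonneg ht.1.le _)
  have hBint : ∫ t in (0:ℝ)..1, t ^ α * B t
      = M * (u * x * |x - u|) * ∫ t in (0:ℝ)..1, t ^ α / D t ^ 2 := by
    rw [← intervalIntegral.integral_const_mul]
    congr 1 with t
    ring
  calc _ = (|x - u| / (u * x)) ^ α * |∫ t in (0:ℝ)..1, t ^ α * Φ' t| := by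
        rw [← hIBP, abs_mul, abs_of_nonneg (by positivity)]
    _ ≤ (|x - u| / (u * x)) ^ α * ∫ t in (0:ℝ)..1, t ^ α * B t :=
        mul_le_mul_of_nonneg_left hbound (by positivity)
    _ = _ := by rw [hBint]; ring

lemma integral_abs_rpow_sub_zero_mul_rpow_neg_two {α u x : ℝ} (hu : 0 < u) (hx : 0 < x) :
    ∫ t in (0:ℝ)..1, |t ^ α - 0| * (t * u + (1 - t) * x) ^ (-(2 * 1 : ℝ))
      = ∫ t in (0:ℝ)..1, t ^ α / (t * u + (1 - t) * x) ^ 2 := by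
  refine intervalIntegral.integral_congr fun t ht => ?_
  rw [uIcc_of_le zero_le_one] at ht
  have hD : 0 < t * u + (1 - t) * x :=
    (lt_min hu hx).trans_le (le_add_mul_one_sub (min_le_left _ _) (min_le_right _ _) ht)
  rw [sub_zero, abs_of_nonneg (rpow_nonneg ht.1 _), show -(2 * 1 : ℝ) = -2 by norm_num,
    rpow_neg hD.le, rpow_two, div_eq_mul_inv]

lemma C2_zero_one_eq {α a x : ℝ} (ha : 0 < a) (hx : 0 < x) :
    C2 α 0 1 a x = x ^ 2 * ∫ t in (0:ℝ)..1, t ^ α / (t * a + (1 - t) * x) ^ 2 := by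
  rw [C2, integral_abs_rpow_sub_zero_mul_rpow_neg_two ha hx, mul_one, rpow_two]

lemma C3_zero_one_eq {α x b : ℝ} (hx : 0 < x) (hb : 0 < b) :
    C3 α 0 1 x b = b ^ 2 * ∫ t in (0:ℝ)..1, t ^ α / (t * b + (1 - t) * x) ^ 2 := by
  rw [C3, integral_abs_rpow_sub_zero_mul_rpow_neg_two hb hx, mul_one, rpow_two]

lemma div_rpow_mul_mul_eq {p q α : ℝ} (hp : 0 ≤ p) (hq : 0 < q) (hα : 0 < α) :
    (p / q) ^ α * (q * p) = p ^ (α + 1) / q ^ (α - 1) := by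
  rw [div_rpow hp hq.le, rpow_add_one' hp (by linarith), rpow_sub_one hq.ne']
  field_simp [(rpow_pos_of_pos hq α).ne']

theorem stmt_14_general (f f' : ℝ → ℝ) (a b : ℝ) (ha : 0 < a)
    (hf : ∀ u ∈ Icc a b, HasDerivAt f (f' u) u)
    (α : ℝ) (hα : 0 < α) (M : ℝ) (hM : ∀ u ∈ Icc a b, |f' u| ≤ M)
    (x : ℝ) (hx : x ∈ Icc a b) :
    |(((x - a) / (a * x)) ^ α + ((b - x) / (b * x)) ^ α) * f x - Real.Gamma (α + 1) * (RLplus α (1 / x) (1 / a) (fun u => f (1 / u)) + RLminus α (1 / x) (1 / b) (fun u => f (1 / u)))| ≤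
      M * ((x - a) ^ (α + 1) / ((a * x) ^ (α - 1) * x ^ 2) * C2 α 0 1 a x
        + (b - x) ^ (α + 1) / ((b * x) ^ (α - 1) * b ^ 2) * C3 α 0 1 x b) := by
  have hx0 : 0 < x := ha.trans_le hx.1
  have hb0 : 0 < b := hx0.trans_le hx.2
  have hA := abs_rpow_mul_sub_integral_le ha hα (left_mem_Icc.2 (hx.1.trans hx.2)) hx hf hM
  have hB := abs_rpow_mul_sub_integral_le ha hα (right_mem_Icc.2 (hx.1.trans hx.2)) hx hf hM
  rw [abs_of_nonneg (sub_nonneg.2 hx.1),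
    div_rpow_mul_mul_eq (sub_nonneg.2 hx.1) (mul_pos ha hx0) hα] at hA
  rw [abs_sub_comm, abs_of_nonneg (sub_nonneg.2 hx.2),
    div_rpow_mul_mul_eq (sub_nonneg.2 hx.2) (mul_pos hb0 hx0) hα] at hB
  rw [mul_add, Gamma_add_one_mul_RLplus hα ha hx.1, Gamma_add_one_mul_RLminus hα hx0 hx.2,
    C2_zero_one_eq ha hx0, C3_zero_one_eq hx0 hb0]
  calc _ = |((x - a) / (a * x)) ^ α *
          (f x - α * ∫ t in (0:ℝ)..1, t ^ (α - 1) * f (a * x / (t * a + (1 - t) * x)))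
        + ((b - x) / (b * x)) ^ α *
          (f x - α * ∫ t in (0:ℝ)..1, t ^ (α - 1) * f (b * x / (t * b + (1 - t) * x)))| := by
        congr 1
        ring
    _ ≤ _ := (abs_add_le _ _).trans (add_le_add hA hB)
    _ = _ := by field_simp

theorem stmt_14 (f f' : ℝ → ℝ) (a b : ℝ) (ha : 0 < a) (hab : a < b)
    (hf : ∀ u ∈ Icc a b, HasDerivAt f (f' u) u)
    (hint : IntervalIntegrable f' volume a b)
    (q : ℝ) (hq : 1 ≤ q)
    (hqc : HarmQuasiConvexOn a b (fun u => |f' u| ^ q))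
    (α : ℝ) (hα : 0 < α) (M : ℝ) (hM : ∀ u ∈ Icc a b, |f' u| ≤ M)
    (x : ℝ) (hx : x ∈ Icc a b) :
    |(((x - a) / (a * x)) ^ α + ((b - x) / (b * x)) ^ α) * f x - Real.Gamma (α + 1) * (RLplus α (1 / x) (1 / a) (fun u => f (1 / u)) + RLminus α (1 / x) (1 / b) (fun u => f (1 / u)))| ≤
      M * ((x - a) ^ (α + 1) / ((a * x) ^ (α - 1) * x ^ 2) * C2 α 0 1 a x
        + (b - x) ^ (α + 1) / ((b * x) ^ (α - 1) * b ^ 2) * C3 α 0 1 x b) :=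
  stmt_14_general f f' a b ha hf α hα M hM x hx
end
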